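/- Suppose ρ and ξ are bipartite states (on spaces of equal dimensions) such that ρ⊗ξ is 1-distillable. Then the state σ = (1/2)|00⟩⟨00| ⊗ ρ + (1/2)|11⟩⟨11| ⊗ ξ (where the flag qubits |0⟩,|1⟩ are split between Alice and Bob) is 2-distillable: σ⊗σ is 1-distillable. -/

import Mathlib

open Matrix BigOperators
open scoped ComplexOrder

/-- Partial transpose over Alice's system of an operator on `A ⊗ B`. -/
def ptAlice {A B : Type*} (M : Matrix (A × B) (A × B) ℂ) :
    Matrix (A × B) (A × B) ℂ :=
  Matrix.of fun p q => M (q.1, p.2) (p.1, q.2)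

/-- A bipartite operator `τ` on `A ⊗ B` is 1-distillable if there is a vector
`ψ` of Schmidt rank 2 (the rank of its reshaping into an Alice-by-Bob matrix)
with `⟨ψ| T_Alice(τ) |ψ⟩ < 0`. -/
def OneDistillable {A B : Type*} [Fintype A] [Fintype B]
    [DecidableEq A] [DecidableEq B]
    (τ : Matrix (A × B) (A × B) ℂ) : Prop :=
  ∃ ψ : A × B → ℂ,
    (Matrix.of (fun a b => ψ (a, b)) : Matrix A B ℂ).rank = 2 ∧
    (star ψ ⬝ᵥ (ptAlice τ).mulVec ψ).re < 0

/-- Tensor product of two bipartite operators, regrouped so that Alice holds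
`A₁ × A₂` and Bob holds `B₁ × B₂`. -/
def bipKron {A1 B1 A2 B2 : Type*}
    (M : Matrix (A1 × B1) (A1 × B1) ℂ) (N : Matrix (A2 × B2) (A2 × B2) ℂ) :
    Matrix ((A1 × A2) × (B1 × B2)) ((A1 × A2) × (B1 × B2)) ℂ :=
  Matrix.of fun p q =>
    M (p.1.1, p.2.1) (q.1.1, q.2.1) * N (p.1.2, p.2.2) (q.1.2, q.2.2)

/-- The flagged state `σ = (1/2)|00⟩⟨00| ⊗ ρ + (1/2)|11⟩⟨11| ⊗ ξ`, with Alice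
holding one flag qubit (together with the `A` parts) and Bob the other flag
qubit (with the `B` parts). -/
noncomputable def flagged {A B : Type*}
    (ρ ξ : Matrix (A × B) (A × B) ℂ) :
    Matrix ((Fin 2 × A) × (Fin 2 × B)) ((Fin 2 × A) × (Fin 2 × B)) ℂ :=
  Matrix.of fun p q =>
    (1 / 2 : ℂ) *
      ((if p.1.1 = 0 ∧ p.2.1 = 0 ∧ q.1.1 = 0 ∧ q.2.1 = 0 then
          ρ (p.1.2, p.2.2) (q.1.2, q.2.2) else 0) +
        (if p.1.1 = 1 ∧ p.2.1 = 1 ∧ q.1.1 = 1 ∧ q.2.1 = 1 then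
          ξ (p.1.2, p.2.2) (q.1.2, q.2.2) else 0))

/-!
Restrict `σ ⊗ σ` to the block in which both of Alice's flags read `(0, 1)` and both of Bob's
read `(0, 1)`: there it is exactly `(1/4) ρ ⊗ ξ`. Embedding a Schmidt rank 2 witness of `ρ ⊗ ξ`
into that block by the local isometries `|a⟩ ↦ |0, a₁⟩|1, a₂⟩` keeps its Schmidt rank, and its
expectation value against the partial transpose of `σ ⊗ σ` is `1/4` of the negative value it
had for `ρ ⊗ ξ`.
-/

open scoped Kronecker

namespace Matrix

theorem conjTranspose_one_submatrix_mul_mul_one_submatrix {m n R : Type*} [Fintype n]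
    [DecidableEq n] [CommSemiring R] [StarRing R] (M : Matrix n n R) (f : m → n) :
    ((1 : Matrix n n R).submatrix id f)ᴴ * M * (1 : Matrix n n R).submatrix id f =
      M.submatrix f f := by
  ext a b
  simp [mul_apply, one_apply]

theorem star_mulVec_dotProduct_mulVec_mulVec {m n R : Type*} [Fintype m] [Fintype n]
    [CommSemiring R] [StarRing R] (E : Matrix n m R) (M : Matrix n n R) (v : m → R) :
    star (E *ᵥ v) ⬝ᵥ M *ᵥ (E *ᵥ v) = star v ⬝ᵥ (Eᴴ * M * E) *ᵥ v := by
  rw [star_mulVec, mulVec_mulVec, dotProduct_mulVec, vecMul_vecMul, ← dotProduct_mulVec,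
    Matrix.mul_assoc]

theorem of_kronecker_mulVec {m m' n n' R : Type*} [Fintype m] [Fintype m'] [CommSemiring R]
    (A : Matrix n m R) (B : Matrix n' m' R) (ψ : m × m' → R) :
    of (fun i j => ((A ⊗ₖ B) *ᵥ ψ) (i, j)) = A * of (fun a b => ψ (a, b)) * Bᵀ := by
  ext i j
  have h := congrFun (kronecker_mulVec_vec B (of fun a b => ψ (a, b))ᵀ A) (i, j)
  rw [show vec (of fun a b => ψ (a, b))ᵀ = ψ from rfl] at h
  rw [of_apply, h, vec, ← transpose_apply (A * _ * Bᵀ), transpose_mul, transpose_mul,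
    transpose_transpose, Matrix.mul_assoc]

theorem rank_one_submatrix_mul_mul_transpose {m m' n n' R : Type*} [Fintype m] [Fintype m']
    [Fintype n'] [DecidableEq n] [DecidableEq n'] [CommRing R] [StrongRankCondition R]
    {f : m → n} {g : m' → n'} (hf : f.Injective) (hg : g.Injective) (S : Matrix m m' R) :
    ((1 : Matrix n n R).submatrix id f * S * ((1 : Matrix n' n' R).submatrix id g)ᵀ).rank =
      S.rank := by
  refine le_antisymm ((rank_mul_le_left _ _).trans (rank_mul_le_right _ _)) ?_
  have hS : ((1 : Matrix n n R).submatrix id f * S *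
      ((1 : Matrix n' n' R).submatrix id g)ᵀ).submatrix f g = S := by
    classical
    ext a b
    simp [mul_apply, one_apply, hf.eq_iff, hg.eq_iff]
  calc S.rank = _ := by rw [hS]
    _ ≤ _ := rank_submatrix_le _ f g

end Matrix

section Distillability

variable {A B A' B' : Type*}

theorem ptAlice_submatrix_prodMap (τ : Matrix (A × B) (A × B) ℂ) (f : A' → A) (g : B' → B) :
    ptAlice (τ.submatrix (Prod.map f g) (Prod.map f g)) =
      (ptAlice τ).submatrix (Prod.map f g) (Prod.map f g) :=
  rfl

theorem ptAlice_smul (c : ℂ) (τ : Matrix (A × B) (A × B) ℂ) :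
    ptAlice (c • τ) = c • ptAlice τ :=
  rfl

variable [Fintype A] [Fintype B] [DecidableEq A] [DecidableEq B]
  [Fintype A'] [Fintype B'] [DecidableEq A'] [DecidableEq B']

theorem OneDistillable.of_submatrix_prodMap {τ : Matrix (A × B) (A × B) ℂ}
    {τ' : Matrix (A' × B') (A' × B') ℂ} {f : A' → A} {g : B' → B} (hf : f.Injective)
    (hg : g.Injective) {c : ℂ} (hc : 0 < c)
    (hτ : τ.submatrix (Prod.map f g) (Prod.map f g) = c • τ') (h : OneDistillable τ') :
    OneDistillable τ := by
  obtain ⟨ψ, hrank, hneg⟩ := h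
  set Ef := (1 : Matrix A A ℂ).submatrix id f
  set Eg := (1 : Matrix B B ℂ).submatrix id g
  have hE : Ef ⊗ₖ Eg = (1 : Matrix (A × B) (A × B) ℂ).submatrix id (Prod.map f g) := by
    rw [kroneckerMap_submatrix_submatrix, one_kronecker_one, Prod.map_id]
  refine ⟨(Ef ⊗ₖ Eg) *ᵥ ψ, ?_, ?_⟩
  · rwa [of_kronecker_mulVec, rank_one_submatrix_mul_mul_transpose hf hg]
  · obtain ⟨hc_re, hc_im⟩ := Complex.pos_iff.mp hc
    rw [star_mulVec_dotProduct_mulVec_mulVec, hE,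
      conjTranspose_one_submatrix_mul_mul_one_submatrix, ← ptAlice_submatrix_prodMap, hτ,
      ptAlice_smul, smul_mulVec, dotProduct_smul, smul_eq_mul, Complex.mul_re, ← hc_im, zero_mul,
      sub_zero]
    exact mul_neg_of_pos_of_neg hc_re hneg

end Distillability

section Flagged

variable {A B : Type*}

def flag01 (a : A × A) : (Fin 2 × A) × (Fin 2 × A) :=
  ((0, a.1), (1, a.2))

theorem flag01_injective : (flag01 : A × A → _).Injective := by
  rintro ⟨a₁, a₂⟩ ⟨b₁, b₂⟩ h
  simp_all [flag01]

theorem bipKron_flagged_submatrix_flag01 (ρ ξ : Matrix (A × B) (A × B) ℂ) :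
    (bipKron (flagged ρ ξ) (flagged ρ ξ)).submatrix (Prod.map flag01 flag01)
        (Prod.map flag01 flag01) = (1 / 4 : ℂ) • bipKron ρ ξ := by
  ext p q
  simp only [bipKron, flagged, flag01, of_apply, submatrix_apply, Prod.map_fst, Prod.map_snd,
    Matrix.smul_apply, smul_eq_mul, and_self, ↓reduceIte, zero_ne_one, one_ne_zero, add_zero,
    zero_add]
  ring

end Flagged

theorem stmt19_general {A B : Type*} [Fintype A] [Fintype B] [DecidableEq A] [DecidableEq B]
    (ρ ξ : Matrix (A × B) (A × B) ℂ)
    (h : OneDistillable (bipKron ρ ξ)) :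
    OneDistillable (bipKron (flagged ρ ξ) (flagged ρ ξ)) :=
  h.of_submatrix_prodMap flag01_injective flag01_injective (by norm_num)
    (bipKron_flagged_submatrix_flag01 ρ ξ)

/-- If `ρ ⊗ ξ` is 1-distillable, then
`σ = (1/2)|00⟩⟨00| ⊗ ρ + (1/2)|11⟩⟨11| ⊗ ξ` is 2-distillable: `σ ⊗ σ` is
1-distillable. -/
theorem stmt19 {A B : Type*} [Fintype A] [Fintype B] [DecidableEq A] [DecidableEq B]
    (ρ ξ : Matrix (A × B) (A × B) ℂ)
    (hρ : ρ.PosSemidef) (hξ : ξ.PosSemidef)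
    (hρtr : ρ.trace = 1) (hξtr : ξ.trace = 1)
    (h : OneDistillable (bipKron ρ ξ)) :
    OneDistillable (bipKron (flagged ρ ξ) (flagged ρ ξ)) :=
  stmt19_general ρ ξ h
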